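/- arXiv:2102.11769 — 2 statements merged into one kernel-verified Lean document; each statement's English description precedes it below -/
import Mathlib

section
/- Let P(ζ) = a·ζ·ζ̄ + b·ζ̄ + b̄·ζ + c be a Hermitian quadratic polynomial with a, b, c ∈ Γ and a, c ∈ ℝ. Let z ∈ ℂ' be a root of P, let (a_n)_{n≥0} be a continued fraction expansion of z over Γ with iteration sequence (z_n) and Q-pair (p_n), (q_n), and suppose |q_n| ≤ |q_{n+1}| for all n. Then at least one of the following holds: (i) there exists a strictly increasing sequence (n_k) in ℕ such that P(p_{n_k}/q_{n_k}) = 0 for all k; (ii) the sequence (a_n) is bounded. In particular, if P has no root in K, then (a_n) is bounded. -/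
/-- The quotient field of a subring `Γ` of `ℂ`, as a subset of `ℂ`. -/
def quotField (Γ : Subring ℂ) : Set ℂ :=
  {x | ∃ p ∈ Γ, ∃ q ∈ Γ, q ≠ 0 ∧ x = p / q}

/-- `(a n)` is a continued fraction expansion of `z` over `Γ`, with iteration
sequence `(zs n)`: `zs 0 = z`, `0 < |zs n - a n| < 1` and `zs (n+1) = (zs n - a n)⁻¹`. -/
def IsCFE (Γ : Subring ℂ) (z : ℂ) (a zs : ℕ → ℂ) : Prop :=
  (∀ n, a n ∈ Γ) ∧ zs 0 = z ∧
    (∀ n, 0 < ‖zs n - a n‖ ∧ ‖zs n - a n‖ < 1) ∧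
    (∀ n, zs (n + 1) = (zs n - a n)⁻¹)

/-- The Q-pair of a sequence of partial quotients, with indices shifted by one:
`p (n+1)` is the paper's `p_n` and `q (n+1)` is the paper's `q_n`
(so `p 0 = p_{-1} = 1` and `q 0 = q_{-1} = 0`). -/
def IsQPair (a p q : ℕ → ℂ) : Prop :=
  p 0 = 1 ∧ p 1 = a 0 ∧ (∀ n, p (n + 2) = a (n + 1) * p (n + 1) + p n) ∧
  q 0 = 0 ∧ q 1 = 1 ∧ (∀ n, q (n + 2) = a (n + 1) * q (n + 1) + q n)


/-- The Hermitian quadratic polynomial `P(ζ) = a ζ ζ̄ + b ζ̄ + b̄ ζ + c`. -/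
def hermPoly (a b c ζ : ℂ) : ℂ :=
  a * ζ * (starRingEnd ℂ) ζ + b * (starRingEnd ℂ) ζ + (starRingEnd ℂ) b * ζ + c

/-!
Write `e_n = p_n - z q_n`. The identity `e_n (q_n z_{n+1} + q_{n-1}) = ±1` together with
`|q_{n-1}| ≤ |q_n|` gives `|z_{n+1}| ≤ 1 + 1 / |q_n e_n|`, so it suffices to bound `|q_n e_n|`
from below. The number `|q_n|² P(p_n / q_n)` lies in `Γ`, because a discrete subring of `ℂ` is
closed under conjugation (a non-real `x ∈ Γ` is quadratic over `ℤ`, so `x + x̄` is a rational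
algebraic integer). Expanding around the root `z`, it is `O(|q_n e_n|)`; by discreteness it is
bounded away from `0` whenever `p_n / q_n` is not a root of `P`.
-/

open ComplexConjugate

theorem Subring.exists_pos_forall_norm_lt_imp_eq_zero (Γ : Subring ℂ) [DiscreteTopology Γ] :
    ∃ η > 0, ∀ x ∈ Γ, ‖x‖ < η → x = 0 := by
  obtain ⟨η, hη, h⟩ := Metric.isOpen_singleton_iff.mp (isOpen_discrete {(0 : Γ)})
  refine ⟨η, hη, fun x hx hxη => ?_⟩
  simpa using congrArg Subtype.val (h ⟨x, hx⟩ (by simpa [Subtype.dist_eq] using hxη))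

theorem Subring.isIntegral_of_discrete (Γ : Subring ℂ) [DiscreteTopology Γ] {x : ℂ} (hx : x ∈ Γ) :
    IsIntegral ℤ x := by
  let L : Submodule ℤ ℂ := AddSubgroup.toIntSubmodule Γ.toAddSubgroup
  have : DiscreteTopology L := ‹DiscreteTopology Γ›
  refine IsIntegral.of_mem_of_fg (subalgebraOfSubring Γ) ?_ x hx
  exact Module.Finite.iff_fg.mp (inferInstanceAs (Module.Finite ℤ L))

theorem Subring.exists_int_relation_of_discrete (Γ : Subring ℂ) [DiscreteTopology Γ] {x : ℂ}
    (hx : x ∈ Γ) (hxim : x.im ≠ 0) (y : ℂ) (hy : y ∈ Γ) :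
    ∃ g : Fin 3 → ℤ, g ≠ 0 ∧ (g 0 : ℂ) + g 1 * x + g 2 * y = 0 := by
  let L : Submodule ℤ ℂ := AddSubgroup.toIntSubmodule Γ.toAddSubgroup
  have : DiscreteTopology L := ‹DiscreteTopology Γ›
  have : IsZLattice ℝ L := by
    refine ⟨eq_top_iff.mpr fun c _ => Submodule.span_mono (s := {1, x}) ?_ ?_⟩
    · rintro _ (rfl | rfl)
      exacts [Γ.one_mem, hx]
    · rw [Submodule.mem_span_pair]
      refine ⟨c.re - c.im * x.re / x.im, c.im / x.im, ?_⟩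
      apply Complex.ext <;> simp <;> field_simp
      ring
  have hrank : Module.finrank ℤ L = 2 := by
    rw [ZLattice.rank ℝ L, Complex.finrank_real_complex]
  let v : Fin 3 → L := ![⟨1, Γ.one_mem⟩, ⟨x, hx⟩, ⟨y, hy⟩]
  have hdep : ¬ LinearIndependent ℤ v := fun hli => by
    simpa [hrank] using hli.fintype_card_le_finrank
  obtain ⟨g, hg, i, hi⟩ := Fintype.not_linearIndependent_iff.mp hdep
  refine ⟨g, fun h => hi (by simp [h]), ?_⟩
  simpa [v, Fin.sum_univ_three, zsmul_eq_mul] using congrArg Subtype.val hg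

theorem Complex.add_conj_eq_ratCast_of_int_relation {x : ℂ} (hxim : x.im ≠ 0) (g : Fin 3 → ℤ)
    (hg0 : g ≠ 0) (hg : (g 0 : ℂ) + g 1 * x + g 2 * x ^ 2 = 0) :
    x + conj x = ((-g 1 / g 2 : ℚ) : ℂ) := by
  have hg2 : g 2 ≠ 0 := by
    intro h2
    have hg1 : g 1 = 0 := by
      simpa [hxim, h2] using congrArg Complex.im hg
    have hg0' : g 0 = 0 := by exact_mod_cast (by simpa [hg1, h2] using hg : (g 0 : ℂ) = 0)
    exact hg0 (funext fun i => by fin_cases i <;> assumption)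
  have hgc : (g 0 : ℂ) + g 1 * conj x + g 2 * conj x ^ 2 = 0 := by
    simpa using congrArg conj hg
  have hne : x - conj x ≠ 0 := by
    rw [sub_ne_zero, Ne, eq_comm, Complex.conj_eq_iff_im]
    exact hxim
  have htr : (g 1 : ℂ) + g 2 * (x + conj x) = 0 :=
    (mul_eq_zero.mp (by linear_combination hg - hgc :
      (x - conj x) * (g 1 + g 2 * (x + conj x)) = 0)).resolve_left hne
  have hg2' : (g 2 : ℂ) ≠ 0 := by exact_mod_cast hg2
  push_cast
  field_simp
  linear_combination htr

theorem Subring.conj_mem_of_discrete (Γ : Subring ℂ) [DiscreteTopology Γ] {x : ℂ} (hx : x ∈ Γ) :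
    conj x ∈ Γ := by
  by_cases hxim : x.im = 0
  · rwa [Complex.conj_eq_iff_im.mpr hxim]
  obtain ⟨g, hg0, hg⟩ := Γ.exists_int_relation_of_discrete hx hxim (x ^ 2) (pow_mem hx 2)
  have htr := Complex.add_conj_eq_ratCast_of_int_relation hxim g hg0 hg
  have hint : IsIntegral ℤ (x + conj x) :=
    (Γ.isIntegral_of_discrete hx).add ((Γ.isIntegral_of_discrete hx).map (starRingEnd ℂ).toIntAlgHom)
  rw [htr, ← eq_ratCast (algebraMap ℚ ℂ), isIntegral_algebraMap_iff (algebraMap ℚ ℂ).injective] at hint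
  obtain ⟨m, hm⟩ := IsIntegrallyClosed.isIntegral_iff.mp hint
  have hconj : conj x = m - x := by
    rw [eq_sub_iff_add_eq', htr, ← hm]
    simp
  rw [hconj]
  exact Γ.sub_mem (intCast_mem Γ m) hx

theorem norm_le_one_add_inv_of_norm_mul_eq_one {𝕜 : Type*} [NormedField 𝕜] {e u v w : 𝕜}
    (h : ‖e * (u * w + v)‖ = 1) (hvu : ‖v‖ ≤ ‖u‖) (hu : u ≠ 0) :
    ‖w‖ ≤ 1 + (‖u‖ * ‖e‖)⁻¹ := by
  have hu' : 0 < ‖u‖ := norm_pos_iff.mpr hu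
  have he : 0 < ‖e‖ := norm_pos_iff.mpr fun he => by simp [he] at h
  have huw : ‖u‖ * ‖w‖ ≤ ‖e‖⁻¹ + ‖u‖ := by
    calc ‖u‖ * ‖w‖ = ‖(u * w + v) - v‖ := by rw [add_sub_cancel_right, norm_mul]
      _ ≤ ‖u * w + v‖ + ‖v‖ := norm_sub_le _ _
      _ ≤ ‖e‖⁻¹ + ‖u‖ := by
        rw [norm_mul] at h
        gcongr
        exact (eq_inv_of_mul_eq_one_right h).le
  calc ‖w‖ = ‖u‖ * ‖w‖ / ‖u‖ := by field_simp
    _ ≤ (‖e‖⁻¹ + ‖u‖) / ‖u‖ := by gcongr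
    _ = 1 + (‖u‖ * ‖e‖)⁻¹ := by field_simp; ring

def hermForm (A B C P Q : ℂ) : ℂ :=
  A * P * conj P + B * conj P * Q + conj B * P * conj Q + C * Q * conj Q

theorem hermForm_eq_mul_hermPoly (A B C P : ℂ) {Q : ℂ} (hQ : Q ≠ 0) :
    hermForm A B C P Q = Q * conj Q * hermPoly A B C (P / Q) := by
  have hQ' : conj Q ≠ 0 := (map_ne_zero _).mpr hQ
  rw [hermForm, hermPoly, map_div₀]
  field_simp

theorem hermForm_mem {Γ : Subring ℂ} (hconj : ∀ x ∈ Γ, conj x ∈ Γ) {A B C P Q : ℂ}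
    (hA : A ∈ Γ) (hB : B ∈ Γ) (hC : C ∈ Γ) (hP : P ∈ Γ) (hQ : Q ∈ Γ) :
    hermForm A B C P Q ∈ Γ := by
  unfold hermForm
  have := hconj _ hP; have := hconj _ hQ; have := hconj _ hB
  aesop (add safe apply [add_mem, mul_mem])

theorem hermForm_add_eq_of_hermPoly_eq_zero {A B C z : ℂ} (hz : hermPoly A B C z = 0) (Q E : ℂ) :
    hermForm A B C (z * Q + E) Q =
      A * E * conj E + (A * z + B) * Q * conj E + (A * conj z + conj B) * conj Q * E := by
  rw [hermPoly] at hz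
  simp only [hermForm, map_add, map_mul]
  linear_combination Q * conj Q * hz

theorem norm_hermForm_add_le {A B C z : ℂ} (hz : hermPoly A B C z = 0) {Q E : ℂ}
    (hEQ : ‖E‖ ≤ ‖Q‖) :
    ‖hermForm A B C (z * Q + E) Q‖ ≤
      (‖A‖ + ‖A * z + B‖ + ‖A * conj z + conj B‖) * (‖Q‖ * ‖E‖) := by
  rw [hermForm_add_eq_of_hermPoly_eq_zero hz]
  have hAEE : ‖A‖ * ‖E‖ * ‖E‖ ≤ ‖A‖ * ‖Q‖ * ‖E‖ := by gcongr
  calc _ ≤ ‖A * E * conj E‖ + ‖(A * z + B) * Q * conj E‖ + ‖(A * conj z + conj B) * conj Q * E‖ :=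
        norm_add₃_le
    _ = ‖A‖ * ‖E‖ * ‖E‖ + (‖A * z + B‖ + ‖A * conj z + conj B‖) * (‖Q‖ * ‖E‖) := by
        simp only [norm_mul, Complex.norm_conj]; ring
    _ ≤ _ := by linarith

section ContinuedFraction

variable {Γ : Subring ℂ} {z : ℂ} {a zs p q : ℕ → ℂ}

theorem IsQPair.mem_subring (hpq : IsQPair a p q) (ha : ∀ n, a n ∈ Γ) (n : ℕ) :
    p n ∈ Γ ∧ q n ∈ Γ := by
  obtain ⟨hp0, hp1, hp, hq0, hq1, hq⟩ := hpq
  induction n using Nat.twoStepInduction with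
  | zero => exact ⟨hp0 ▸ Γ.one_mem, hq0 ▸ Γ.zero_mem⟩
  | one => exact ⟨hp1 ▸ ha 0, hq1 ▸ Γ.one_mem⟩
  | more n ih ih' =>
    rw [hp, hq]
    exact ⟨add_mem (mul_mem (ha _) ih'.1) ih.1, add_mem (mul_mem (ha _) ih'.2) ih.2⟩

theorem IsQPair.one_le_norm_q (hpq : IsQPair a p q) (hmono : ∀ n, ‖q (n + 1)‖ ≤ ‖q (n + 2)‖)
    (n : ℕ) : 1 ≤ ‖q (n + 1)‖ := by
  induction n with
  | zero => simp [hpq.2.2.2.2.1]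
  | succ n ih => exact ih.trans (hmono n)

theorem IsQPair.q_succ_ne_zero (hpq : IsQPair a p q) (hmono : ∀ n, ‖q (n + 1)‖ ≤ ‖q (n + 2)‖)
    (n : ℕ) : q (n + 1) ≠ 0 :=
  norm_pos_iff.mp (one_pos.trans_le (hpq.one_le_norm_q hmono n))

theorem IsQPair.norm_q_le_succ (hpq : IsQPair a p q) (hmono : ∀ n, ‖q (n + 1)‖ ≤ ‖q (n + 2)‖) :
    ∀ n, ‖q n‖ ≤ ‖q (n + 1)‖
  | 0 => by simp [hpq.2.2.2.1]
  | n + 1 => hmono n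

theorem IsCFE.norm_sub_lt_one (hcf : IsCFE Γ z a zs) (n : ℕ) : ‖zs n - a n‖ < 1 :=
  (hcf.2.2.1 n).2

theorem IsCFE.mul_sub_eq_one (hcf : IsCFE Γ z a zs) (n : ℕ) : zs (n + 1) * (zs n - a n) = 1 := by
  rw [hcf.2.2.2]
  exact inv_mul_cancel₀ (norm_pos_iff.mp (hcf.2.2.1 n).1)

theorem IsCFE.sub_mul_q_succ (hcf : IsCFE Γ z a zs) (hpq : IsQPair a p q) (n : ℕ) :
    p (n + 1) - z * q (n + 1) = -(zs n - a n) * (p n - z * q n) := by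
  obtain ⟨hp0, hp1, hp, hq0, hq1, hq⟩ := hpq
  induction n with
  | zero => rw [hp0, hp1, hq0, hq1, hcf.2.1]; ring
  | succ n ih =>
    rw [hp, hq]
    linear_combination zs (n + 1) * ih - (p n - z * q n) * hcf.mul_sub_eq_one n

theorem IsCFE.norm_sub_mul_q_le_one (hcf : IsCFE Γ z a zs) (hpq : IsQPair a p q) (n : ℕ) :
    ‖p n - z * q n‖ ≤ 1 := by
  induction n with
  | zero => simp [hpq.1, hpq.2.2.2.1]
  | succ n ih =>
    rw [hcf.sub_mul_q_succ hpq, norm_mul, norm_neg]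
    exact mul_le_one₀ (hcf.norm_sub_lt_one n).le (norm_nonneg _) ih

theorem IsCFE.norm_sub_mul_q_mul_eq_one (hcf : IsCFE Γ z a zs) (hpq : IsQPair a p q) (n : ℕ) :
    ‖(p (n + 1) - z * q (n + 1)) * (q (n + 1) * zs (n + 1) + q n)‖ = 1 := by
  have ⟨_, hp1, _, hq0, hq1, hq⟩ := hpq
  induction n with
  | zero =>
    have h1 : (p 1 - z * q 1) * (q 1 * zs 1 + q 0) = -1 := by
      rw [hp1, hq1, hq0, ← hcf.2.1]
      linear_combination -hcf.mul_sub_eq_one 0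
    rw [h1, norm_neg, norm_one]
  | succ n ih =>
    rw [← ih, ← norm_neg, hcf.sub_mul_q_succ hpq, hq]
    congr 1
    linear_combination
      (p (n + 1) - z * q (n + 1)) * (a (n + 1) * q (n + 1) + q n) * hcf.mul_sub_eq_one (n + 1)

theorem IsCFE.norm_succ_le_of_hermPoly_ne_zero (hconj : ∀ x ∈ Γ, conj x ∈ Γ)
    {η : ℝ} (hη : 0 < η) (hΓ : ∀ x ∈ Γ, ‖x‖ < η → x = 0)
    {A B C : ℂ} (hA : A ∈ Γ) (hB : B ∈ Γ) (hC : C ∈ Γ) (hz : hermPoly A B C z = 0)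
    (hcf : IsCFE Γ z a zs) (hpq : IsQPair a p q)
    (hmono : ∀ n, ‖q (n + 1)‖ ≤ ‖q (n + 2)‖) {n : ℕ}
    (hn : hermPoly A B C (p (n + 1) / q (n + 1)) ≠ 0) :
    ‖a (n + 1)‖ ≤ 2 + (‖A‖ + ‖A * z + B‖ + ‖A * conj z + conj B‖) / η := by
  have hq : q (n + 1) ≠ 0 := hpq.q_succ_ne_zero hmono n
  set E := p (n + 1) - z * q (n + 1)
  have hF : hermForm A B C (p (n + 1)) (q (n + 1)) ≠ 0 := by
    rw [hermForm_eq_mul_hermPoly _ _ _ _ hq]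
    exact mul_ne_zero (mul_ne_zero hq ((map_ne_zero _).mpr hq)) hn
  have hFΓ : hermForm A B C (p (n + 1)) (q (n + 1)) ∈ Γ :=
    hermForm_mem hconj hA hB hC (hpq.mem_subring hcf.1 _).1 (hpq.mem_subring hcf.1 _).2
  have hFle := norm_hermForm_add_le hz
    ((hcf.norm_sub_mul_q_le_one hpq (n + 1)).trans (hpq.one_le_norm_q hmono n))
  rw [show z * q (n + 1) + E = p (n + 1) by ring] at hFle
  have hηF := (le_of_not_gt fun h => hF (hΓ _ hFΓ h)).trans hFle
  have hQE : (‖q (n + 1)‖ * ‖E‖)⁻¹ ≤ (‖A‖ + ‖A * z + B‖ + ‖A * conj z + conj B‖) / η := by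
    have hpos := pos_of_mul_pos_right (hη.trans_le hηF) (by positivity)
    rwa [inv_eq_one_div, div_le_div_iff₀ hpos hη, one_mul]
  calc ‖a (n + 1)‖ ≤ ‖zs (n + 1)‖ + ‖zs (n + 1) - a (n + 1)‖ := norm_le_norm_add_norm_sub _ _
    _ ≤ (1 + (‖q (n + 1)‖ * ‖E‖)⁻¹) + 1 :=
      add_le_add (norm_le_one_add_inv_of_norm_mul_eq_one (hcf.norm_sub_mul_q_mul_eq_one hpq n)
        (hpq.norm_q_le_succ hmono n) hq) (hcf.norm_sub_lt_one _).le
    _ ≤ _ := by linarith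

theorem IsCFE.exists_forall_norm_le_of_finite_roots [DiscreteTopology Γ]
    {A B C : ℂ} (hA : A ∈ Γ) (hB : B ∈ Γ) (hC : C ∈ Γ) (hz : hermPoly A B C z = 0)
    (hcf : IsCFE Γ z a zs) (hpq : IsQPair a p q)
    (hmono : ∀ n, ‖q (n + 1)‖ ≤ ‖q (n + 2)‖)
    (hfin : {n | hermPoly A B C (p (n + 1) / q (n + 1)) = 0}.Finite) :
    ∃ M : ℝ, ∀ n, ‖a n‖ ≤ M := by
  obtain ⟨η, hη, hΓ⟩ := Γ.exists_pos_forall_norm_lt_imp_eq_zero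
  obtain ⟨N, hN⟩ := hfin.bddAbove
  have hev : ∀ᶠ n in Filter.atTop,
      ‖a n‖ ≤ 2 + (‖A‖ + ‖A * z + B‖ + ‖A * conj z + conj B‖) / η := by
    refine Filter.eventually_atTop.mpr ⟨N + 2, fun n hn => ?_⟩
    obtain ⟨m, rfl⟩ : ∃ m, n = m + 1 := ⟨n - 1, by omega⟩
    refine hcf.norm_succ_le_of_hermPoly_ne_zero (fun _ => Γ.conj_mem_of_discrete) hη hΓ
      hA hB hC hz hpq hmono fun hm => ?_
    have := hN hm
    omega
  obtain ⟨M, hM⟩ := (Filter.isBoundedUnder_of_eventually_le hev).bddAbove_range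
  exact ⟨M, fun n => hM ⟨n, rfl⟩⟩

end ContinuedFraction

theorem stmt_9_general (Γ : Subring ℂ) (hdisc : DiscreteTopology Γ)
    (A B C : ℂ) (hA : A ∈ Γ) (hB : B ∈ Γ) (hC : C ∈ Γ)
    (z : ℂ) (hroot : hermPoly A B C z = 0)
    (a zs p q : ℕ → ℂ) (hcf : IsCFE Γ z a zs) (hpq : IsQPair a p q)
    (hmono : ∀ n : ℕ, ‖q (n + 1)‖ ≤ ‖q (n + 2)‖) :
    ((∃ nk : ℕ → ℕ, StrictMono nk ∧
        ∀ k, hermPoly A B C (p (nk k + 1) / q (nk k + 1)) = 0)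
      ∨ (∃ M : ℝ, ∀ n, ‖a n‖ ≤ M))
    ∧ ((∀ w ∈ quotField Γ, hermPoly A B C w ≠ 0) →
        ∃ M : ℝ, ∀ n, ‖a n‖ ≤ M) := by
  set S := {n | hermPoly A B C (p (n + 1) / q (n + 1)) = 0}
  have hbdd : S.Finite → ∃ M : ℝ, ∀ n, ‖a n‖ ≤ M :=
    hcf.exists_forall_norm_le_of_finite_roots hA hB hC hroot hpq hmono
  refine ⟨?_, fun hnoroot => hbdd ?_⟩
  · by_cases hS : S.Infinite
    · exact Or.inl ⟨Nat.nth (· ∈ S), Nat.nth_strictMono hS, Nat.nth_mem_of_infinite hS⟩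
    · exact Or.inr (hbdd (Set.not_infinite.mp hS))
  · convert Set.finite_empty
    refine Set.eq_empty_of_forall_notMem fun n hn => hnoroot _ ?_ hn
    have hmem := hpq.mem_subring hcf.1 (n + 1)
    exact ⟨_, hmem.1, _, hmem.2, hpq.q_succ_ne_zero hmono n, rfl⟩

/-- Corollary 3.7: for a root `z ∈ ℂ'` of a Hermitian quadratic polynomial `P` with
coefficients in `Γ` (`a, c` real), if `|q_n| ≤ |q_{n+1}|` for all `n` then either
infinitely many convergents `p_n/q_n` are roots of `P`, or the partial quotients are
bounded; in particular if `P` has no root in `K` then `(a_n)` is bounded. -/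
theorem stmt_9 (Γ : Subring ℂ) (hdisc : DiscreteTopology Γ)
    (A B C : ℂ) (hA : A ∈ Γ) (hB : B ∈ Γ) (hC : C ∈ Γ)
    (hAre : A.im = 0) (hCre : C.im = 0)
    (z : ℂ) (hz : z ∉ quotField Γ) (hroot : hermPoly A B C z = 0)
    (a zs p q : ℕ → ℂ) (hcf : IsCFE Γ z a zs) (hpq : IsQPair a p q)
    (hmono : ∀ n : ℕ, ‖q (n + 1)‖ ≤ ‖q (n + 2)‖) :
    ((∃ nk : ℕ → ℕ, StrictMono nk ∧
        ∀ k, hermPoly A B C (p (nk k + 1) / q (nk k + 1)) = 0)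
      ∨ (∃ M : ℝ, ∀ n, ‖a n‖ ≤ M))
    ∧ ((∀ w ∈ quotField Γ, hermPoly A B C w ≠ 0) →
        ∃ M : ℝ, ∀ n, ‖a n‖ ≤ M) :=
  stmt_9_general Γ hdisc A B C hA hB hC z hroot a zs p q hcf hpq hmono
end

section
/- Let Γ be a Euclidean subring of ℂ with quotient field K, and let z ∈ ℂ' = ℂ \ K. Let (a_n) be a continued fraction expansion of z over Γ such that the denominator sequence satisfies |q_{n−1}| ≤ |q_n| for all n ≥ 1, let (z_n) be the iteration sequence and (δ_n) the relative errors. Suppose inf_n |z_n| > 1 and limsup_n |δ_n| < ν(Γ). Then z is badly approximable with respect to Γ if and only if the sequence (a_n) is bounded. -/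
/-- The sequence of relative errors `δ_n = q_n (q_n z - p_n)` (index shifted by one
in `p`, `q`, so `relErr z p q n` is the paper's `δ_n`). -/
def relErr (z : ℂ) (p q : ℕ → ℂ) (n : ℕ) : ℂ :=
  q (n + 1) * (q (n + 1) * z - p (n + 1))

/-- `z ∈ ℂ` is badly approximable with respect to `Γ`. -/
def BadlyApprox (Γ : Subring ℂ) (z : ℂ) : Prop :=
  ∃ δ : ℝ, 0 < δ ∧ ∀ p ∈ Γ, ∀ q ∈ Γ, q ≠ (0 : ℂ) →
    δ / ‖q‖ ^ 2 ≤ ‖z - p / q‖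

open Filter Topology

theorem Subring.one_le_norm_of_mem {𝕜 : Type*} [NormedDivisionRing 𝕜] {Γ : Subring 𝕜}
    [DiscreteTopology Γ] {γ : 𝕜} (hγ : γ ∈ Γ) (h0 : γ ≠ 0) : 1 ≤ ‖γ‖ := by
  by_contra! h
  have hpow : Tendsto (fun n : ℕ => (⟨γ ^ n, Γ.pow_mem hγ n⟩ : Γ)) atTop (𝓝 0) :=
    tendsto_subtype_rng.2 (tendsto_pow_atTop_nhds_zero_of_norm_lt_one h)
  rw [nhds_discrete, tendsto_pure] at hpow
  obtain ⟨n, hn⟩ := hpow.exists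
  exact h0 (pow_eq_zero_iff'.1 (congrArg Subtype.val hn)).1

theorem Subring.min_le_norm_mul_sub_of_norm_eq_one {𝕜 : Type*} [NormedDivisionRing 𝕜]
    {Γ : Subring 𝕜} [DiscreteTopology Γ] {w α u v : 𝕜} (hα : α ∈ Γ) (hu : u ∈ Γ) (hv : v ∈ Γ)
    (hv1 : ‖v‖ = 1) : min ‖w - α‖ (1 - ‖w - α‖) ≤ ‖v * w - u‖ := by
  by_cases h : v * α = u
  · rw [← h, ← mul_sub, norm_mul, hv1, one_mul]
    exact min_le_left _ _
  · have h1 := one_le_norm_of_mem (Γ.sub_mem (Γ.mul_mem hv hα) hu) (sub_ne_zero.2 h)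
    have h2 : ‖v * α - u‖ ≤ ‖w - α‖ + ‖v * w - u‖ :=
      calc ‖v * α - u‖ = ‖v * (α - w) + (v * w - u)‖ := by rw [mul_sub]; abel_nf
        _ ≤ ‖v * (α - w)‖ + ‖v * w - u‖ := norm_add_le _ _
        _ = ‖w - α‖ + ‖v * w - u‖ := by rw [norm_mul, hv1, one_mul, norm_sub_rev]
    exact (min_le_right _ _).trans (by linarith)

theorem badlyApprox_iff {Γ : Subring ℂ} {z : ℂ} :
    BadlyApprox Γ z ↔
      ∃ δ : ℝ, 0 < δ ∧ ∀ P ∈ Γ, ∀ Q ∈ Γ, Q ≠ 0 → δ ≤ ‖Q‖ * ‖Q * z - P‖ := by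
  have key : ∀ {δ : ℝ} {P Q : ℂ}, Q ≠ 0 →
      (δ / ‖Q‖ ^ 2 ≤ ‖z - P / Q‖ ↔ δ ≤ ‖Q‖ * ‖Q * z - P‖) := fun {δ P Q} hQ => by
    have hQ' : 0 < ‖Q‖ := norm_pos_iff.2 hQ
    rw [show z - P / Q = (Q * z - P) / Q by field_simp, norm_div,
      div_le_div_iff₀ (by positivity) hQ']
    constructor <;> intro h <;> nlinarith
  simp only [BadlyApprox]
  refine exists_congr fun δ => and_congr_right fun _ => ?_
  exact forall₂_congr fun P _ => forall₂_congr fun Q _ => forall_congr' fun hQ => key hQ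

section ContinuedFraction

variable {Γ : Subring ℂ} {z : ℂ} {a zs p q : ℕ → ℂ}

/-- The paper's `q_{n-1} z - p_{n-1}`. -/
def approxErr (z : ℂ) (p q : ℕ → ℂ) (n : ℕ) : ℂ :=
  q n * z - p n

/-- The denominator in `z = (p (n+1) * zs (n+1) + p n) / completeDenom zs q n`. -/
def completeDenom (zs q : ℕ → ℂ) (n : ℕ) : ℂ :=
  q (n + 1) * zs (n + 1) + q n

theorem relErr_eq_mul_approxErr (n : ℕ) :
    relErr z p q n = q (n + 1) * approxErr z p q (n + 1) :=
  rfl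

theorem norm_completeDenom_le {n : ℕ} (hq : ‖q n‖ ≤ ‖q (n + 1)‖) :
    ‖completeDenom zs q n‖ ≤ ‖q (n + 1)‖ * (‖zs (n + 1)‖ + 1) := by
  calc ‖completeDenom zs q n‖ ≤ ‖q (n + 1)‖ * ‖zs (n + 1)‖ + ‖q n‖ := by
        rw [← norm_mul]; exact norm_add_le _ _
    _ ≤ _ := by linarith

theorem norm_completeDenom_ge {n : ℕ} (hq : ‖q n‖ ≤ ‖q (n + 1)‖) :
    ‖q (n + 1)‖ * (‖zs (n + 1)‖ - 1) ≤ ‖completeDenom zs q n‖ := by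
  calc ‖q (n + 1)‖ * (‖zs (n + 1)‖ - 1) ≤ ‖q (n + 1) * zs (n + 1)‖ - ‖-q n‖ := by
        rw [norm_mul, norm_neg]; linarith
    _ ≤ _ := by
        rw [completeDenom, ← sub_neg_eq_add]; exact norm_sub_norm_le _ _

namespace IsQPair

theorem mem (hpq : IsQPair a p q) (ha : ∀ n, a n ∈ Γ) : ∀ n, p n ∈ Γ ∧ q n ∈ Γ := by
  obtain ⟨hp0, hp1, hp, hq0, hq1, hq⟩ := hpq
  refine Nat.twoStepInduction ?_ ?_ fun n ih ih' => ?_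
  · rw [hp0, hq0]; exact ⟨Γ.one_mem, Γ.zero_mem⟩
  · rw [hp1, hq1]; exact ⟨ha 0, Γ.one_mem⟩
  · rw [hp, hq]
    exact ⟨Γ.add_mem (Γ.mul_mem (ha _) ih'.1) ih.1, Γ.add_mem (Γ.mul_mem (ha _) ih'.2) ih.2⟩

theorem det (hpq : IsQPair a p q) (n : ℕ) :
    p (n + 1) * q n - p n * q (n + 1) = (-1) ^ (n + 1) := by
  obtain ⟨hp0, hp1, hp, hq0, hq1, hq⟩ := hpq
  induction n with
  | zero => rw [hp1, hq0, hp0, hq1]; ring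
  | succ n ih => rw [hp, hq]; linear_combination (-1 : ℂ) * ih

theorem exists_eq_add (hpq : IsQPair a p q) (ha : ∀ n, a n ∈ Γ) (k : ℕ) {P Q : ℂ}
    (hP : P ∈ Γ) (hQ : Q ∈ Γ) :
    ∃ u ∈ Γ, ∃ v ∈ Γ, P = u * p (k + 1) + v * p k ∧ Q = u * q (k + 1) + v * q k := by
  have hs : ((-1 : ℂ) ^ (k + 1)) ∈ Γ := Γ.pow_mem (Γ.neg_mem Γ.one_mem) _
  have hs2 : ((-1 : ℂ) ^ (k + 1)) ^ 2 = 1 := by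
    rw [← pow_mul]; exact Even.neg_one_pow ⟨k + 1, by ring⟩
  have hpq' := hpq.mem ha
  refine ⟨(-1) ^ (k + 1) * (P * q k - Q * p k),
    Γ.mul_mem hs (Γ.sub_mem (Γ.mul_mem hP (hpq' k).2) (Γ.mul_mem hQ (hpq' k).1)),
    (-1) ^ (k + 1) * (Q * p (k + 1) - P * q (k + 1)),
    Γ.mul_mem hs (Γ.sub_mem (Γ.mul_mem hQ (hpq' _).1) (Γ.mul_mem hP (hpq' _).2)), ?_, ?_⟩
  · linear_combination (-(-1 : ℂ) ^ (k + 1) * P) * hpq.det k - P * hs2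
  · linear_combination (-(-1 : ℂ) ^ (k + 1) * Q) * hpq.det k - Q * hs2

theorem monotone_norm_q (hpq : IsQPair a p q) (hmono : ∀ n, 1 ≤ n → ‖q n‖ ≤ ‖q (n + 1)‖) :
    Monotone fun n => ‖q n‖ := by
  refine monotone_nat_of_le_succ fun n => ?_
  rcases n with _ | n
  · simp [hpq.2.2.2.1, hpq.2.2.2.2.1]
  · exact hmono _ n.succ_pos

theorem one_le_norm_q_succ (hpq : IsQPair a p q) (hq : Monotone fun n => ‖q n‖) (n : ℕ) :
    1 ≤ ‖q (n + 1)‖ := by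
  simpa [hpq.2.2.2.2.1] using hq (Nat.le_add_left 1 n)

end IsQPair

namespace IsCFE

theorem sub_ne_zero (hcf : IsCFE Γ z a zs) (n : ℕ) : zs n - a n ≠ 0 :=
  norm_pos_iff.1 (hcf.2.2.1 n).1

theorem sub_mul_zs_succ (hcf : IsCFE Γ z a zs) (n : ℕ) : (zs n - a n) * zs (n + 1) = 1 := by
  rw [hcf.2.2.2 n, mul_inv_cancel₀ (hcf.sub_ne_zero n)]

theorem norm_sub_eq_inv (hcf : IsCFE Γ z a zs) (n : ℕ) : ‖zs n - a n‖ = ‖zs (n + 1)‖⁻¹ := by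
  rw [hcf.2.2.2 n, norm_inv, inv_inv]

theorem norm_a_le (hcf : IsCFE Γ z a zs) (n : ℕ) : ‖a n‖ ≤ ‖zs n‖ + 1 := by
  have := norm_sub_le (zs n) (zs n - a n)
  rw [sub_sub_cancel] at this
  linarith [(hcf.2.2.1 n).2]

theorem norm_zs_le (hcf : IsCFE Γ z a zs) (n : ℕ) : ‖zs n‖ ≤ ‖a n‖ + 1 := by
  have := norm_add_le (a n) (zs n - a n)
  rw [add_sub_cancel] at this
  linarith [(hcf.2.2.1 n).2]

theorem approxErr_succ (hcf : IsCFE Γ z a zs) (hpq : IsQPair a p q) (n : ℕ) :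
    approxErr z p q (n + 1) = -(zs n - a n) * approxErr z p q n := by
  obtain ⟨hp0, hp1, hp, hq0, hq1, hq⟩ := hpq
  induction n with
  | zero => simp only [approxErr]; rw [hp1, hq1, hp0, hq0, hcf.2.1]; ring
  | succ n ih =>
    have hprev : approxErr z p q n = -zs (n + 1) * approxErr z p q (n + 1) := by
      rw [ih]; linear_combination -approxErr z p q n * hcf.sub_mul_zs_succ n
    simp only [approxErr] at hprev ih ⊢
    rw [hp, hq]
    linear_combination hprev

theorem approxErr_ne_zero (hcf : IsCFE Γ z a zs) (hpq : IsQPair a p q) (n : ℕ) :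
    approxErr z p q n ≠ 0 := by
  induction n with
  | zero => simp [approxErr, hpq.1, hpq.2.2.2.1]
  | succ n ih =>
    rw [hcf.approxErr_succ hpq]; exact mul_ne_zero (neg_ne_zero.2 (hcf.sub_ne_zero n)) ih

theorem norm_approxErr_le (hcf : IsCFE Γ z a zs) (hpq : IsQPair a p q) {c : ℝ} (hc0 : 0 < c)
    (hc : ∀ n, c ≤ ‖zs n‖) (n : ℕ) : ‖approxErr z p q n‖ ≤ c⁻¹ ^ n := by
  induction n with
  | zero => simp [approxErr, hpq.1, hpq.2.2.2.1]
  | succ n ih =>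
    rw [hcf.approxErr_succ hpq, norm_mul, norm_neg, hcf.norm_sub_eq_inv, pow_succ']
    exact mul_le_mul (inv_anti₀ hc0 (hc _)) ih (norm_nonneg _) (by positivity)

theorem approxErr_mul_completeDenom (hcf : IsCFE Γ z a zs) (hpq : IsQPair a p q) (n : ℕ) :
    approxErr z p q (n + 1) * completeDenom zs q n = (-1) ^ n := by
  induction n with
  | zero =>
    simp only [approxErr, completeDenom]
    rw [hpq.2.2.2.2.1, hpq.2.1, hpq.2.2.2.1, ← hcf.2.1]
    simpa using hcf.sub_mul_zs_succ 0
  | succ n ih =>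
    have hD : (zs (n + 1) - a (n + 1)) * completeDenom zs q (n + 1) = completeDenom zs q n := by
      simp only [completeDenom]
      rw [hpq.2.2.2.2.2]
      linear_combination (a (n + 1) * q (n + 1) + q n) * hcf.sub_mul_zs_succ (n + 1)
    rw [hcf.approxErr_succ hpq, pow_succ, ← ih, ← hD]
    ring

theorem norm_approxErr_mul_norm_completeDenom (hcf : IsCFE Γ z a zs) (hpq : IsQPair a p q)
    (n : ℕ) : ‖approxErr z p q (n + 1)‖ * ‖completeDenom zs q n‖ = 1 := by
  rw [← norm_mul, hcf.approxErr_mul_completeDenom hpq]; simp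

theorem norm_relErr_mul_norm_completeDenom (hcf : IsCFE Γ z a zs) (hpq : IsQPair a p q)
    (n : ℕ) : ‖relErr z p q n‖ * ‖completeDenom zs q n‖ = ‖q (n + 1)‖ := by
  rw [relErr_eq_mul_approxErr, norm_mul, mul_assoc,
    hcf.norm_approxErr_mul_norm_completeDenom hpq, mul_one]

theorem mul_sub_eq (hcf : IsCFE Γ z a zs) (hpq : IsQPair a p q) (k : ℕ) (u v : ℂ) :
    (u * q (k + 1) + v * q k) * z - (u * p (k + 1) + v * p k) =
      approxErr z p q k * (zs k - a k) * (v * zs (k + 1) - u) := by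
  have h := hcf.approxErr_succ hpq k
  simp only [approxErr] at h ⊢
  linear_combination u * h - v * (q k * z - p k) * hcf.sub_mul_zs_succ k

theorem norm_zs_succ_le (hcf : IsCFE Γ z a zs) (hpq : IsQPair a p q)
    (hq : Monotone fun n => ‖q n‖) {δ : ℝ} (hδ : 0 < δ) {k : ℕ}
    (h : δ ≤ ‖q (k + 1)‖ * ‖approxErr z p q (k + 1)‖) : ‖zs (k + 1)‖ ≤ δ⁻¹ + 1 := by
  have hED := hcf.norm_approxErr_mul_norm_completeDenom hpq k
  have hD := norm_completeDenom_ge (zs := zs) (hq k.le_succ)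
  have hq1 := hpq.one_le_norm_q_succ hq k
  have hE := norm_nonneg (approxErr z p q (k + 1))
  have : δ * (‖zs (k + 1)‖ - 1) ≤ 1 := by
    rcases le_or_gt ‖zs (k + 1)‖ 1 with hz | hz
    · nlinarith
    · nlinarith [mul_le_mul_of_nonneg_right h (sub_pos.2 hz).le, mul_le_mul_of_nonneg_left hD hE]
  rw [← one_div, ← sub_le_iff_le_add, le_div_iff₀' hδ]
  exact this

theorem inv_le_norm_q_mul_norm_approxErr (hcf : IsCFE Γ z a zs) (hpq : IsQPair a p q)
    (hq : Monotone fun n => ‖q n‖) {M : ℝ} (hM : ∀ n, ‖zs n‖ ≤ M) (k : ℕ) :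
    (M + 1)⁻¹ ≤ ‖q (k + 1)‖ * ‖approxErr z p q (k + 1)‖ := by
  have hM0 : 0 < M + 1 := by linarith [norm_nonneg (zs 0), hM 0]
  have hD := norm_completeDenom_le (zs := zs) (hq k.le_succ)
  rw [inv_le_iff_one_le_mul₀ hM0]
  calc 1 = ‖approxErr z p q (k + 1)‖ * ‖completeDenom zs q k‖ :=
        (hcf.norm_approxErr_mul_norm_completeDenom hpq k).symm
    _ ≤ ‖approxErr z p q (k + 1)‖ * (‖q (k + 1)‖ * (M + 1)) := by
        gcongr; exact hD.trans (by gcongr; exact hM _)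
    _ = _ := by ring

theorem bounded_of_badlyApprox (hcf : IsCFE Γ z a zs) (hpq : IsQPair a p q)
    (hq : Monotone fun n => ‖q n‖) (h : BadlyApprox Γ z) : ∃ M, ∀ n, ‖a n‖ ≤ M := by
  obtain ⟨δ, hδ, hδle⟩ := badlyApprox_iff.1 h
  have hzs (k : ℕ) : ‖zs (k + 1)‖ ≤ δ⁻¹ + 1 := by
    have hmem := hpq.mem hcf.1 (k + 1)
    have hq0 : q (k + 1) ≠ 0 := norm_pos_iff.1 (by linarith [hpq.one_le_norm_q_succ hq k])
    exact hcf.norm_zs_succ_le hpq hq hδ (hδle _ hmem.1 _ hmem.2 hq0)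
  refine ⟨max ‖a 0‖ (δ⁻¹ + 2), fun n => ?_⟩
  rcases n with _ | k
  · exact le_max_left _ _
  · linarith [hcf.norm_a_le (k + 1), hzs k, le_max_right ‖a 0‖ (δ⁻¹ + 2)]

theorem sub_div_le_norm_mul_zs_sub (hcf : IsCFE Γ z a zs) (hpq : IsQPair a p q) {ν : ℝ}
    {k : ℕ} {u v : ℂ} (hν : ν ≤ ‖v‖) (hQ0 : u * q (k + 1) + v * q k ≠ 0)
    (hQ : ‖u * q (k + 1) + v * q k‖ ≤ ‖q (k + 1)‖) :
    ν / ‖relErr z p q k‖ - 1 ≤ ‖v * zs (k + 1) - u‖ := by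
  have hqk : 0 < ‖q (k + 1)‖ := (norm_pos_iff.2 hQ0).trans_le hQ
  have hrD := hcf.norm_relErr_mul_norm_completeDenom hpq k
  have hr : 0 < ‖relErr z p q k‖ := by
    by_contra! hr
    rw [le_antisymm hr (norm_nonneg _), zero_mul] at hrD
    exact hqk.ne hrD
  have hid : v * completeDenom zs q k - (u * q (k + 1) + v * q k) =
      q (k + 1) * (v * zs (k + 1) - u) := by
    simp only [completeDenom]; ring
  have hmain : ‖q (k + 1)‖ * (ν / ‖relErr z p q k‖ - 1) ≤ ‖q (k + 1)‖ * ‖v * zs (k + 1) - u‖ :=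
    calc ‖q (k + 1)‖ * (ν / ‖relErr z p q k‖ - 1)
        = ν * ‖completeDenom zs q k‖ - ‖q (k + 1)‖ := by
          rw [← hrD]; field_simp
      _ ≤ ‖v‖ * ‖completeDenom zs q k‖ - ‖u * q (k + 1) + v * q k‖ := by
          gcongr
      _ ≤ ‖q (k + 1)‖ * ‖v * zs (k + 1) - u‖ := by
          rw [← norm_mul, ← norm_mul, ← hid]; exact norm_sub_norm_le _ _
  exact le_of_mul_le_mul_left hmain hqk

theorem min_le_norm_mul_zs_sub (hcf : IsCFE Γ z a zs) (hpq : IsQPair a p q)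
    [DiscreteTopology Γ] {ν : ℝ} (hν : ν ∈ lowerBounds {r | ∃ γ ∈ Γ, 1 < ‖γ‖ ∧ ‖γ‖ = r})
    {k : ℕ} {u v : ℂ} (hu : u ∈ Γ) (hv : v ∈ Γ) (hQ0 : u * q (k + 1) + v * q k ≠ 0)
    (hQ : ‖u * q (k + 1) + v * q k‖ ≤ ‖q (k + 1)‖) :
    min (min ‖zs (k + 1) - a (k + 1)‖ (1 - ‖zs (k + 1) - a (k + 1)‖))
      (ν / ‖relErr z p q k‖ - 1) ≤ ‖v * zs (k + 1) - u‖ := by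
  rcases eq_or_ne v 0 with rfl | hv0
  · have hu0 : u ≠ 0 := by rintro rfl; simp at hQ0
    have := Subring.one_le_norm_of_mem hu hu0
    rw [zero_mul, zero_sub, norm_neg]
    refine (min_le_left _ _).trans ((min_le_right _ _).trans ?_)
    linarith [norm_nonneg (zs (k + 1) - a (k + 1))]
  rcases (Subring.one_le_norm_of_mem hv hv0).eq_or_lt with hv1 | hv1
  · exact (min_le_left _ _).trans
      (Subring.min_le_norm_mul_sub_of_norm_eq_one (hcf.1 _) hu hv hv1.symm)
  · exact (min_le_right _ _).trans
      (hcf.sub_div_le_norm_mul_zs_sub hpq (hν ⟨v, hv, hv1, rfl⟩) hQ0 hQ)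

theorem exists_pos_le_norm_mul_sub (hcf : IsCFE Γ z a zs) (hpq : IsQPair a p q)
    [DiscreteTopology Γ] {ν : ℝ} (hν : ν ∈ lowerBounds {r | ∃ γ ∈ Γ, 1 < ‖γ‖ ∧ ‖γ‖ = r})
    {c M β : ℝ} (hc1 : 1 < c) (hc : ∀ n, c ≤ ‖zs n‖) (hM : ∀ n, ‖zs n‖ ≤ M)
    (hβ : 0 < β) (hβν : β < ν) :
    ∃ κ > 0, ∀ k, ‖relErr z p q k‖ ≤ β → ∀ P ∈ Γ, ∀ Q ∈ Γ, Q ≠ 0 → ‖Q‖ ≤ ‖q (k + 1)‖ →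
      κ * ‖approxErr z p q k‖ ≤ ‖Q * z - P‖ := by
  have hc0 : 0 < c := one_pos.trans hc1
  have hM0 : 0 < M := hc0.trans_le ((hc 0).trans (hM 0))
  have hsub_ge (n : ℕ) : M⁻¹ ≤ ‖zs n - a n‖ := by
    rw [hcf.norm_sub_eq_inv]; exact inv_anti₀ (hc0.trans_le (hc _)) (hM _)
  have hsub_le (n : ℕ) : ‖zs n - a n‖ ≤ c⁻¹ := by
    rw [hcf.norm_sub_eq_inv]; exact inv_anti₀ hc0 (hc _)
  set τ := min (min M⁻¹ (1 - c⁻¹)) (ν / β - 1)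
  have hτ : 0 < τ := by
    have : c⁻¹ < 1 := inv_lt_one_of_one_lt₀ hc1
    have : 1 < ν / β := (one_lt_div hβ).2 hβν
    exact lt_min (lt_min (inv_pos.2 hM0) (by linarith)) (by linarith)
  refine ⟨M⁻¹ * τ, mul_pos (inv_pos.2 hM0) hτ, fun k hk P hP Q hQ hQ0 hQk => ?_⟩
  have hr : 0 < ‖relErr z p q k‖ := by
    rw [relErr_eq_mul_approxErr]
    exact norm_pos_iff.2 (mul_ne_zero (norm_pos_iff.1 ((norm_pos_iff.2 hQ0).trans_le hQk))
      (hcf.approxErr_ne_zero hpq _))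
  obtain ⟨u, hu, v, hv, rfl, rfl⟩ := hpq.exists_eq_add hcf.1 k hP hQ
  have hτ_le : τ ≤ ‖v * zs (k + 1) - u‖ :=
    (min_le_min (min_le_min (hsub_ge _) (by linarith [hsub_le (k + 1)]))
      (by gcongr; linarith)).trans (hcf.min_le_norm_mul_zs_sub hpq hν hu hv hQ0 hQk)
  rw [hcf.mul_sub_eq hpq, norm_mul, norm_mul]
  calc M⁻¹ * τ * ‖approxErr z p q k‖
      ≤ ‖zs k - a k‖ * ‖v * zs (k + 1) - u‖ * ‖approxErr z p q k‖ := by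
        gcongr
        exact hsub_ge k
    _ = _ := by ring

theorem tendsto_norm_q (hcf : IsCFE Γ z a zs) (hpq : IsQPair a p q) {c : ℝ} (hc1 : 1 < c)
    (hc : ∀ n, c ≤ ‖zs n‖) {d : ℝ} (hd : 0 < d)
    (hdq : ∀ k, d ≤ ‖q (k + 1)‖ * ‖approxErr z p q (k + 1)‖) :
    Tendsto (fun k => ‖q k‖) atTop atTop := by
  have hc0 : 0 < c := one_pos.trans hc1
  rw [← tendsto_add_atTop_iff_nat 1]
  refine tendsto_atTop_mono (fun k => ?_) (((tendsto_pow_atTop_atTop_of_one_lt hc1).comp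
    (tendsto_add_atTop_nat 1)).const_mul_atTop hd)
  calc d * c ^ (k + 1) ≤ ‖q (k + 1)‖ * c⁻¹ ^ (k + 1) * c ^ (k + 1) := by
        gcongr
        exact (hdq k).trans (by gcongr; exact hcf.norm_approxErr_le hpq hc0 hc _)
    _ = ‖q (k + 1)‖ := by rw [inv_pow, mul_assoc, inv_mul_cancel₀ (by positivity), mul_one]

end IsCFE

/-- `h` is applied at the least `k ≥ N` with `‖Q‖ ≤ ‖q (k + 1)‖`; when `k > N`, minimality
gives `‖q k‖ < ‖Q‖`, so `hqe` bounds `‖e k‖` below by `d / ‖Q‖`. -/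
theorem badlyApprox_of_forall_le [DiscreteTopology Γ] {e : ℕ → ℂ} {N : ℕ} {κ d : ℝ}
    (hκ : 0 < κ) (hd : 0 < d) (heN : e N ≠ 0) (hq : Tendsto (fun k => ‖q k‖) atTop atTop)
    (hqe : ∀ k, N < k → d ≤ ‖q k‖ * ‖e k‖)
    (h : ∀ k, N ≤ k → ∀ P ∈ Γ, ∀ Q ∈ Γ, Q ≠ 0 → ‖Q‖ ≤ ‖q (k + 1)‖ → κ * ‖e k‖ ≤ ‖Q * z - P‖) :
    BadlyApprox Γ z := by
  classical
  refine badlyApprox_iff.2 ⟨κ * min ‖e N‖ d, by positivity, fun P hP Q hQ hQ0 => ?_⟩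
  have hex : ∃ k, N ≤ k ∧ ‖Q‖ ≤ ‖q (k + 1)‖ :=
    (((tendsto_add_atTop_iff_nat 1).2 hq).eventually_ge_atTop ‖Q‖ |>.and
      (eventually_ge_atTop N)).exists.imp fun _ hk => ⟨hk.2, hk.1⟩
  obtain ⟨hNk, hQk⟩ := Nat.find_spec hex
  have hkey := h _ hNk P hP Q hQ hQ0 hQk
  rcases hNk.eq_or_lt with hNk | hNk
  · calc κ * min ‖e N‖ d ≤ κ * ‖e (Nat.find hex)‖ := by
          rw [← hNk]; gcongr; exact min_le_left _ _
      _ ≤ ‖Q * z - P‖ := hkey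
      _ ≤ ‖Q‖ * ‖Q * z - P‖ := le_mul_of_one_le_left (norm_nonneg _)
          (Subring.one_le_norm_of_mem hQ hQ0)
  · have hqQ : ‖q (Nat.find hex)‖ < ‖Q‖ := by
      have hmin := Nat.find_min hex (m := Nat.find hex - 1) (by omega)
      rw [Nat.sub_add_cancel (by omega)] at hmin
      exact not_le.1 fun hle => hmin ⟨by omega, hle⟩
    calc κ * min ‖e N‖ d ≤ κ * (‖q (Nat.find hex)‖ * ‖e (Nat.find hex)‖) := by
          gcongr; exact (min_le_right _ _).trans (hqe _ hNk)
      _ ≤ κ * (‖Q‖ * ‖e (Nat.find hex)‖) := by gcongr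
      _ = ‖Q‖ * (κ * ‖e (Nat.find hex)‖) := by ring
      _ ≤ ‖Q‖ * ‖Q * z - P‖ := by gcongr

theorem IsCFE.badlyApprox_of_bounded (hcf : IsCFE Γ z a zs) (hpq : IsQPair a p q)
    [DiscreteTopology Γ] (hq : Monotone fun n => ‖q n‖) {ν : ℝ}
    (hν : ν ∈ lowerBounds {r | ∃ γ ∈ Γ, 1 < ‖γ‖ ∧ ‖γ‖ = r}) {c : ℝ} (hc1 : 1 < c)
    (hc : ∀ n, c ≤ ‖zs n‖) {β : ℝ} (hβν : β < ν) (hβ : ∀ᶠ n in atTop, ‖relErr z p q n‖ ≤ β)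
    {M : ℝ} (hM : ∀ n, ‖a n‖ ≤ M) : BadlyApprox Γ z := by
  have hzM (n : ℕ) : ‖zs n‖ ≤ M + 1 := (hcf.norm_zs_le n).trans (by linarith [hM n])
  obtain ⟨N, hN⟩ := eventually_atTop.1 hβ
  have hβ0 : 0 < β := by
    refine (norm_pos_iff.2 ?_).trans_le (hN N le_rfl)
    rw [relErr_eq_mul_approxErr]
    exact mul_ne_zero (norm_pos_iff.1 (one_pos.trans_le (hpq.one_le_norm_q_succ hq N)))
      (hcf.approxErr_ne_zero hpq _)
  have hd : 0 < (M + 1 + 1)⁻¹ := inv_pos.2 (by linarith [norm_nonneg (a 0), hM 0])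
  have hqe := hcf.inv_le_norm_q_mul_norm_approxErr hpq hq hzM
  obtain ⟨κ, hκ, hκle⟩ := hcf.exists_pos_le_norm_mul_sub hpq hν hc1 hc hzM hβ0 hβν
  refine badlyApprox_of_forall_le hκ hd (hcf.approxErr_ne_zero hpq N)
    (hcf.tendsto_norm_q hpq hc1 hc hd hqe) (fun k hk => ?_) fun k hk => hκle k (hN k hk)
  obtain ⟨j, rfl⟩ := Nat.exists_eq_add_of_lt hk
  exact hqe _

end ContinuedFraction

theorem stmt_11_general (Γ : Subring ℂ) (hdisc : DiscreteTopology Γ)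
    (ν : ℝ) (hν : IsLeast {r : ℝ | ∃ γ ∈ Γ, 1 < ‖γ‖ ∧ ‖γ‖ = r} ν)
    (z : ℂ)
    (a zs p q : ℕ → ℂ) (hcf : IsCFE Γ z a zs) (hpq : IsQPair a p q)
    (hmono : ∀ n : ℕ, 1 ≤ n → ‖q n‖ ≤ ‖q (n + 1)‖)
    (hinf : ∃ c : ℝ, 1 < c ∧ ∀ n, c ≤ ‖zs n‖)
    (hlimsup : ∃ β : ℝ, β < ν ∧
      ∀ᶠ n in Filter.atTop, ‖relErr z p q n‖ ≤ β) :
    BadlyApprox Γ z ↔ ∃ M : ℝ, ∀ n, ‖a n‖ ≤ M := by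
  obtain ⟨c, hc1, hc⟩ := hinf
  obtain ⟨β, hβν, hβ⟩ := hlimsup
  have hq := hpq.monotone_norm_q hmono
  exact ⟨hcf.bounded_of_badlyApprox hpq hq,
    fun ⟨_, hM⟩ => hcf.badlyApprox_of_bounded hpq hq hν.2 hc1 hc hβν hβ hM⟩

/-- Corollary 4.4: for an expansion with monotonic `|q_n|`, `inf |z_n| > 1` and
`limsup |δ_n| < ν(Γ)`, the number `z` is badly approximable with respect to the
Euclidean subring `Γ` iff the partial quotients are bounded. -/
theorem stmt_11 (Γ : Subring ℂ) (hdisc : DiscreteTopology Γ)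
    (heucl : ∀ w : ℂ, ∃ γ ∈ Γ, ‖w - γ‖ < 1)
    (ν : ℝ) (hν : IsLeast {r : ℝ | ∃ γ ∈ Γ, 1 < ‖γ‖ ∧ ‖γ‖ = r} ν)
    (z : ℂ) (hz : z ∉ quotField Γ)
    (a zs p q : ℕ → ℂ) (hcf : IsCFE Γ z a zs) (hpq : IsQPair a p q)
    (hmono : ∀ n : ℕ, 1 ≤ n → ‖q n‖ ≤ ‖q (n + 1)‖)
    (hinf : ∃ c : ℝ, 1 < c ∧ ∀ n, c ≤ ‖zs n‖)
    (hlimsup : ∃ β : ℝ, β < ν ∧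
      ∀ᶠ n in Filter.atTop, ‖relErr z p q n‖ ≤ β) :
    BadlyApprox Γ z ↔ ∃ M : ℝ, ∀ n, ‖a n‖ ≤ M :=
  stmt_11_general Γ hdisc ν hν z a zs p q hcf hpq hmono hinf hlimsup
end
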